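/- arXiv:2507.08838 — 2 statements merged into one kernel-verified Lean document; each statement's English description precedes it below -/
import Mathlib

section
/- Let π_old and π be policies (conditional probability distributions over actions given states) for a finite MDP with discount factor γ ∈ [0,1) and reward bounded so that the advantage function A^{π_old} is bounded. Define the surrogate L_{π_old}(π) = η(π_old) + E_{s∼ρ_{π_old}, a∼π(·|s)}[A^{π_old}(s,a)] and C = 4·max_{s,a}|A^{π_old}(s,a)|·γ/(1−γ)². Then η(π) ≥ L_{π_old}(π) − C·(max_s D_TV(π_old(·|s), π(·|s)))². -/
/-!
Write `Ā(s) = ∑ₐ π(a|s) A^{π_old}(s,a)`, `ε = max |A^{π_old}|` and `α = max_s D_TV`. The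
performance difference identity `η(π) − η(π_old) = ∑ₛ ρ_π(s) Ā(s)` (telescope `γᵗ V^{π_old}` along
the trajectory of `π`) shows that `η(π) − L = ∑ₛ (ρ_π − ρ_{π_old})(s) Ā(s)`. Because
`∑ₐ π_old(a|s) A^{π_old}(s,a) = 0`, `|Ā(s)| ≤ 2αε`. Each step of the chain moves the two state
distributions at most `2α` further apart in `ℓ¹`, so at time `t` they differ by at most `2tα`, and
`‖ρ_π − ρ_{π_old}‖₁ ≤ ∑ₜ γᵗ 2tα = 2αγ/(1−γ)²`.
-/

def IsProb {O : Type*} [Fintype O] (p : O → ℝ) : Prop :=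
  (∀ o, 0 ≤ p o) ∧ ∑ o, p o = 1

noncomputable def tvDist {O : Type*} [Fintype O] (p q : O → ℝ) : ℝ :=
  (1 / 2) * ∑ o, |p o - q o|

section MDP

variable {S Act : Type*} [Fintype S] [Fintype Act]

/-- State distribution at time `t` when starting from `μ0` and following policy `π`
in the MDP with transition kernel `P`. -/
noncomputable def stateDist (μ0 : S → ℝ) (P : S → Act → S → ℝ)
    (π : S → Act → ℝ) : ℕ → S → ℝ
  | 0 => μ0
  | t + 1 => fun s' => ∑ s, ∑ a, stateDist μ0 P π t s * π s a * P s a s'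

/-- Expected reward collected at time `t`. -/
noncomputable def expReward (μ0 : S → ℝ) (P : S → Act → S → ℝ)
    (r : S → Act → S → ℝ) (π : S → Act → ℝ) (t : ℕ) : ℝ :=
  ∑ s, ∑ a, ∑ s', stateDist μ0 P π t s * π s a * P s a s' * r s a s'

/-- Expected discounted return `η(π)` from initial distribution `μ0`. -/
noncomputable def expReturn (μ0 : S → ℝ) (P : S → Act → S → ℝ)
    (r : S → Act → S → ℝ) (γ : ℝ) (π : S → Act → ℝ) : ℝ :=
  ∑' t : ℕ, γ ^ t * expReward μ0 P r π t

/-- Value function `V^π(s)`: expected discounted return started at `s`. -/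
noncomputable def valueFun [DecidableEq S] (P : S → Act → S → ℝ)
    (r : S → Act → S → ℝ) (γ : ℝ) (π : S → Act → ℝ) (s : S) : ℝ :=
  expReturn (fun s' => if s' = s then 1 else 0) P r γ π

/-- Action-value function `Q^π(s,a)`. -/
noncomputable def qFun [DecidableEq S] (P : S → Act → S → ℝ)
    (r : S → Act → S → ℝ) (γ : ℝ) (π : S → Act → ℝ) (s : S) (a : Act) : ℝ :=
  ∑ s', P s a s' * (r s a s' + γ * valueFun P r γ π s')

/-- Advantage function `A^π(s,a) = Q^π(s,a) − V^π(s)`. -/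
noncomputable def advFun [DecidableEq S] (P : S → Act → S → ℝ)
    (r : S → Act → S → ℝ) (γ : ℝ) (π : S → Act → ℝ) (s : S) (a : Act) : ℝ :=
  qFun P r γ π s a - valueFun P r γ π s

/-- Unnormalized discounted state visitation distribution `ρ_π`. -/
noncomputable def visitDist (μ0 : S → ℝ) (P : S → Act → S → ℝ) (γ : ℝ)
    (π : S → Act → ℝ) (s : S) : ℝ :=
  ∑' t : ℕ, γ ^ t * stateDist μ0 P π t s

end MDP

open Finset

lemma IsProb.le_one {O : Type*} [Fintype O] {p : O → ℝ} (hp : IsProb p) (o : O) : p o ≤ 1 :=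
  hp.2 ▸ single_le_sum (fun i _ => hp.1 i) (mem_univ o)

lemma IsProb.abs_sum_mul_le {O : Type*} [Fintype O] {p : O → ℝ} (hp : IsProb p) {f : O → ℝ}
    {B : ℝ} (hf : ∀ o, |f o| ≤ B) : |∑ o, p o * f o| ≤ B :=
  calc |∑ o, p o * f o| ≤ ∑ o, p o * B :=
        (abs_sum_le_sum_abs _ _).trans <| sum_le_sum fun o _ => by
          rw [abs_mul, abs_of_nonneg (hp.1 o)]
          exact mul_le_mul_of_nonneg_left (hf o) (hp.1 o)
    _ = B := by rw [← sum_mul, hp.2, one_mul]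

lemma isProb_ite_eq {O : Type*} [Fintype O] [DecidableEq O] (o : O) :
    IsProb fun x : O => if x = o then 1 else 0 :=
  ⟨fun _ => ite_nonneg zero_le_one le_rfl, by simp⟩

lemma abs_sum_sub_mul_le {O : Type*} [Fintype O] (p q : O → ℝ) {f : O → ℝ} {B : ℝ}
    (hf : ∀ o, |f o| ≤ B) : |∑ o, (p o - q o) * f o| ≤ (∑ o, |p o - q o|) * B :=
  calc |∑ o, (p o - q o) * f o| ≤ ∑ o, |p o - q o| * B :=
        (abs_sum_le_sum_abs _ _).trans <| sum_le_sum fun o _ => by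
          rw [abs_mul]
          exact mul_le_mul_of_nonneg_left (hf o) (abs_nonneg _)
    _ = (∑ o, |p o - q o|) * B := by rw [sum_mul]

lemma tvDist_nonneg {O : Type*} [Fintype O] (p q : O → ℝ) : 0 ≤ tvDist p q :=
  mul_nonneg (by norm_num) (sum_nonneg fun _ _ => abs_nonneg _)

lemma sum_abs_sub_eq_two_mul_tvDist {O : Type*} [Fintype O] (p q : O → ℝ) :
    ∑ o, |p o - q o| = 2 * tvDist q p := by
  simp only [tvDist, abs_sub_comm (q _)]
  ring

lemma summable_pow_mul_of_abs_le {γ : ℝ} (hγ0 : 0 ≤ γ) (hγ1 : γ < 1) {f : ℕ → ℝ} {M : ℝ}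
    (hf : ∀ t, |f t| ≤ M) : Summable fun t => γ ^ t * f t :=
  .of_norm_bounded ((summable_geometric_of_lt_one hγ0 hγ1).mul_right M) fun t => by
    rw [Real.norm_eq_abs, abs_mul, abs_of_nonneg (pow_nonneg hγ0 t)]
    exact mul_le_mul_of_nonneg_left (hf t) (pow_nonneg hγ0 t)

lemma summable_natCast_mul_pow {γ : ℝ} (hγ0 : 0 ≤ γ) (hγ1 : γ < 1) :
    Summable fun t : ℕ => (t : ℝ) * γ ^ t := by
  simpa using summable_pow_mul_geometric_of_norm_lt_one 1
    (by rwa [Real.norm_eq_abs, abs_of_nonneg hγ0] : ‖γ‖ < 1)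

lemma abs_tsum_le_tsum_abs {ι : Type*} {f : ι → ℝ} (hf : Summable fun i => |f i|) :
    |∑' i, f i| ≤ ∑' i, |f i| := by
  simpa only [Real.norm_eq_abs] using
    norm_tsum_le_tsum_norm (f := f) (by simpa only [Real.norm_eq_abs] using hf)

section MDP

variable {S Act : Type*} [Fintype S] [Fintype Act]

noncomputable def stepDist (P : S → Act → S → ℝ) (π : S → Act → ℝ) (μ : S → ℝ) : S → ℝ :=
  fun s' => ∑ s, ∑ a, μ s * π s a * P s a s'

noncomputable def stepReward (P : S → Act → S → ℝ) (r : S → Act → S → ℝ)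
    (π : S → Act → ℝ) (s : S) : ℝ :=
  ∑ a, ∑ s', π s a * P s a s' * r s a s'

lemma stateDist_succ (μ0 : S → ℝ) (P : S → Act → S → ℝ) (π : S → Act → ℝ) (t : ℕ) :
    stateDist μ0 P π (t + 1) = stepDist P π (stateDist μ0 P π t) := rfl

lemma stateDist_succ' (μ0 : S → ℝ) (P : S → Act → S → ℝ) (π : S → Act → ℝ) (t : ℕ) :
    stateDist μ0 P π (t + 1) = stateDist (stepDist P π μ0) P π t := by
  induction t with
  | zero => rfl
  | succ t ih => rw [stateDist_succ, ih, ← stateDist_succ]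

lemma sum_stepDist_mul (P : S → Act → S → ℝ) (π : S → Act → ℝ) (μ f : S → ℝ) :
    ∑ s', stepDist P π μ s' * f s' = ∑ s, μ s * ∑ a, π s a * ∑ s', P s a s' * f s' := by
  simp only [stepDist, sum_mul, mul_sum]
  rw [sum_comm]
  refine sum_congr rfl fun s _ => ?_
  rw [sum_comm]
  simp only [mul_assoc]

lemma IsProb.stepDist {μ : S → ℝ} (hμ : IsProb μ) {P : S → Act → S → ℝ}
    (hP : ∀ s a, IsProb (P s a)) {π : S → Act → ℝ} (hπ : ∀ s, IsProb (π s)) :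
    IsProb (stepDist P π μ) := by
  refine ⟨fun s' => sum_nonneg fun s _ => sum_nonneg fun a _ =>
    mul_nonneg (mul_nonneg (hμ.1 s) ((hπ s).1 a)) ((hP s a).1 s'), ?_⟩
  simpa [(hP _ _).2, (hπ _).2, hμ.2] using sum_stepDist_mul P π μ 1

lemma isProb_stateDist {μ0 : S → ℝ} (hμ0 : IsProb μ0) {P : S → Act → S → ℝ}
    (hP : ∀ s a, IsProb (P s a)) {π : S → Act → ℝ} (hπ : ∀ s, IsProb (π s)) (t : ℕ) :
    IsProb (stateDist μ0 P π t) := by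
  induction t with
  | zero => exact hμ0
  | succ t ih => exact ih.stepDist hP hπ

lemma stateDist_eq_sum_mul [DecidableEq S] (μ0 : S → ℝ) (P : S → Act → S → ℝ)
    (π : S → Act → ℝ) (t : ℕ) (s' : S) :
    stateDist μ0 P π t s'
      = ∑ s0, μ0 s0 * stateDist (fun x => if x = s0 then 1 else 0) P π t s' := by
  induction t generalizing s' with
  | zero => simp [stateDist]
  | succ t ih =>
    simp only [stateDist_succ, stepDist, ih, sum_mul, mul_sum]
    conv_rhs => rw [sum_comm]
    refine sum_congr rfl fun s _ => ?_
    rw [sum_comm]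
    exact sum_congr rfl fun _ _ => sum_congr rfl fun _ _ => by ring

lemma expReward_eq_sum_mul_stepReward (μ0 : S → ℝ) (P : S → Act → S → ℝ)
    (r : S → Act → S → ℝ) (π : S → Act → ℝ) (t : ℕ) :
    expReward μ0 P r π t = ∑ s, stateDist μ0 P π t s * stepReward P r π s := by
  simp only [expReward, stepReward, mul_sum, mul_assoc]

lemma expReward_succ (μ0 : S → ℝ) (P : S → Act → S → ℝ) (r : S → Act → S → ℝ)
    (π : S → Act → ℝ) (t : ℕ) :
    expReward μ0 P r π (t + 1) = expReward (stepDist P π μ0) P r π t := by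
  rw [expReward, stateDist_succ', expReward]

variable {μ0 : S → ℝ} {P : S → Act → S → ℝ} {r : S → Act → S → ℝ} {γ : ℝ} {π π' : S → Act → ℝ}

lemma summable_pow_mul_sum_stateDist_mul (hμ0 : IsProb μ0) (hP : ∀ s a, IsProb (P s a))
    (hπ : ∀ s, IsProb (π s)) (hγ0 : 0 ≤ γ) (hγ1 : γ < 1) (f : S → ℝ) :
    Summable fun t => γ ^ t * ∑ s, stateDist μ0 P π t s * f s := by
  obtain ⟨M, hM⟩ := Finite.exists_le fun s => |f s|
  exact summable_pow_mul_of_abs_le hγ0 hγ1 fun t =>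
    (isProb_stateDist hμ0 hP hπ t).abs_sum_mul_le hM

lemma summable_pow_mul_expReward (hμ0 : IsProb μ0) (hP : ∀ s a, IsProb (P s a))
    (hπ : ∀ s, IsProb (π s)) (hγ0 : 0 ≤ γ) (hγ1 : γ < 1) :
    Summable fun t => γ ^ t * expReward μ0 P r π t := by
  simpa only [expReward_eq_sum_mul_stepReward] using
    summable_pow_mul_sum_stateDist_mul hμ0 hP hπ hγ0 hγ1 (stepReward P r π)

lemma expReturn_eq_sum_mul_valueFun [DecidableEq S] (μ0 : S → ℝ) (hP : ∀ s a, IsProb (P s a))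
    (hπ : ∀ s, IsProb (π s)) (hγ0 : 0 ≤ γ) (hγ1 : γ < 1) :
    expReturn μ0 P r γ π = ∑ s0, μ0 s0 * valueFun P r γ π s0 := by
  have h : ∀ t, γ ^ t * expReward μ0 P r π t
      = ∑ s0, μ0 s0 * (γ ^ t * expReward (fun x => if x = s0 then 1 else 0) P r π t) := by
    intro t
    simp only [expReward_eq_sum_mul_stepReward, stateDist_eq_sum_mul μ0 P π t, sum_mul, mul_sum]
    rw [sum_comm]
    exact sum_congr rfl fun _ _ => sum_congr rfl fun _ _ => by ring
  simp only [expReturn, valueFun, h]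
  rw [Summable.tsum_finsetSum fun s0 _ =>
    (summable_pow_mul_expReward (isProb_ite_eq s0) hP hπ hγ0 hγ1).mul_left (μ0 s0)]
  simp only [tsum_mul_left]

lemma expReturn_eq_expReward_zero_add (hμ0 : IsProb μ0) (hP : ∀ s a, IsProb (P s a))
    (hπ : ∀ s, IsProb (π s)) (hγ0 : 0 ≤ γ) (hγ1 : γ < 1) :
    expReturn μ0 P r γ π = expReward μ0 P r π 0 + γ * expReturn (stepDist P π μ0) P r γ π := by
  rw [expReturn, (summable_pow_mul_expReward hμ0 hP hπ hγ0 hγ1).tsum_eq_zero_add, expReturn,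
    ← tsum_mul_left]
  simp only [pow_zero, one_mul, pow_succ, expReward_succ, mul_comm _ γ, mul_assoc]

lemma sum_mul_sum_mul_qFun [DecidableEq S] (μ : S → ℝ) :
    ∑ s, μ s * ∑ a, π s a * qFun P r γ π' s a
      = expReward μ P r π 0 + γ * ∑ s', stepDist P π μ s' * valueFun P r γ π' s' := by
  rw [expReward_eq_sum_mul_stepReward, sum_stepDist_mul, mul_sum, ← sum_add_distrib]
  refine sum_congr rfl fun s _ => ?_
  simp only [qFun, stepReward, stateDist, mul_add, sum_add_distrib, mul_sum]
  congr 1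
  · exact sum_congr rfl fun _ _ => sum_congr rfl fun _ _ => by ring
  · exact sum_congr rfl fun _ _ => sum_congr rfl fun _ _ => by ring

lemma valueFun_eq_sum_mul_qFun [DecidableEq S] (hP : ∀ s a, IsProb (P s a))
    (hπ : ∀ s, IsProb (π s)) (hγ0 : 0 ≤ γ) (hγ1 : γ < 1) (s : S) :
    valueFun P r γ π s = ∑ a, π s a * qFun P r γ π s a := by
  have h := sum_mul_sum_mul_qFun (P := P) (r := r) (γ := γ) (π := π) (π' := π)
    fun x => if x = s then 1 else 0
  simp only [ite_mul, one_mul, zero_mul, sum_ite_eq', mem_univ, if_true] at h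
  rw [h, valueFun, expReturn_eq_expReward_zero_add (isProb_ite_eq s) hP hπ hγ0 hγ1,
    expReturn_eq_sum_mul_valueFun _ hP hπ hγ0 hγ1]

lemma sum_mul_advFun_self [DecidableEq S] (hP : ∀ s a, IsProb (P s a))
    (hπ : ∀ s, IsProb (π s)) (hγ0 : 0 ≤ γ) (hγ1 : γ < 1) (s : S) :
    ∑ a, π s a * advFun P r γ π s a = 0 := by
  simp only [advFun, mul_sub, sum_sub_distrib, ← sum_mul, (hπ s).2, one_mul,
    valueFun_eq_sum_mul_qFun hP hπ hγ0 hγ1 s, sub_self]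

lemma sum_mul_advFun_eq_sum_sub_mul [DecidableEq S] (hP : ∀ s a, IsProb (P s a))
    (hπ' : ∀ s, IsProb (π' s)) (hγ0 : 0 ≤ γ) (hγ1 : γ < 1) (s : S) :
    ∑ a, π s a * advFun P r γ π' s a = ∑ a, (π s a - π' s a) * advFun P r γ π' s a := by
  simp only [sub_mul, sum_sub_distrib, sum_mul_advFun_self hP hπ' hγ0 hγ1 s, sub_zero]

lemma summable_pow_mul_stateDist (hμ0 : IsProb μ0) (hP : ∀ s a, IsProb (P s a))
    (hπ : ∀ s, IsProb (π s)) (hγ0 : 0 ≤ γ) (hγ1 : γ < 1) (s : S) :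
    Summable fun t => γ ^ t * stateDist μ0 P π t s :=
  summable_pow_mul_of_abs_le hγ0 hγ1 fun t => by
    have hd := isProb_stateDist hμ0 hP hπ t
    rw [abs_of_nonneg (hd.1 s)]
    exact hd.le_one s

lemma sum_visitDist_mul (hμ0 : IsProb μ0) (hP : ∀ s a, IsProb (P s a))
    (hπ : ∀ s, IsProb (π s)) (hγ0 : 0 ≤ γ) (hγ1 : γ < 1) (f : S → ℝ) :
    ∑ s, visitDist μ0 P γ π s * f s = ∑' t, γ ^ t * ∑ s, stateDist μ0 P π t s * f s := by
  simp only [visitDist, ← tsum_mul_right, mul_sum, ← mul_assoc]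
  exact (Summable.tsum_finsetSum fun s _ =>
    (summable_pow_mul_stateDist hμ0 hP hπ hγ0 hγ1 s).mul_right (f s)).symm

lemma expReturn_sub_expReturn_eq [DecidableEq S] (hμ0 : IsProb μ0) (hP : ∀ s a, IsProb (P s a))
    (hπ : ∀ s, IsProb (π s)) (hπ' : ∀ s, IsProb (π' s)) (hγ0 : 0 ≤ γ) (hγ1 : γ < 1) :
    expReturn μ0 P r γ π - expReturn μ0 P r γ π'
      = ∑ s, visitDist μ0 P γ π s * ∑ a, π s a * advFun P r γ π' s a := by
  set g : ℕ → ℝ := fun t => γ ^ t * ∑ s, stateDist μ0 P π t s * valueFun P r γ π' s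
  have hg : Summable g := summable_pow_mul_sum_stateDist_mul hμ0 hP hπ hγ0 hγ1 _
  have hg' : Summable fun t => g (t + 1) := (summable_nat_add_iff 1).2 hg
  have hstep : ∀ t, γ ^ t * ∑ s, stateDist μ0 P π t s * ∑ a, π s a * advFun P r γ π' s a
      = γ ^ t * expReward μ0 P r π t + (g (t + 1) - g t) := fun t => by
    have hQ := sum_mul_sum_mul_qFun (P := P) (r := r) (γ := γ) (π := π) (π' := π')
      (stateDist μ0 P π t)
    simp only [advFun, mul_sub, sum_sub_distrib, ← sum_mul, (hπ _).2, one_mul, hQ]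
    rw [show expReward (stateDist μ0 P π t) P r π 0 = expReward μ0 P r π t from rfl]
    simp only [g, pow_succ, stateDist_succ]
    ring
  rw [sum_visitDist_mul hμ0 hP hπ hγ0 hγ1, tsum_congr hstep,
    (summable_pow_mul_expReward hμ0 hP hπ hγ0 hγ1).tsum_add (hg'.sub hg), hg'.tsum_sub hg,
    hg.tsum_eq_zero_add]
  simp only [g, pow_zero, one_mul]
  rw [stateDist, ← expReturn_eq_sum_mul_valueFun μ0 hP hπ' hγ0 hγ1, expReturn]
  ring

lemma sum_abs_stepDist_sub_le (hP : ∀ s a, IsProb (P s a)) (hπ : ∀ s, IsProb (π s))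
    (μ : S → ℝ) {ν : S → ℝ} (hν : ∀ s, 0 ≤ ν s) :
    ∑ s', |stepDist P π μ s' - stepDist P π' ν s'|
      ≤ ∑ s, |μ s - ν s| + ∑ s, ν s * ∑ a, |π s a - π' s a| := by
  calc ∑ s', |stepDist P π μ s' - stepDist P π' ν s'|
      ≤ ∑ s', ∑ s, ∑ a, (|μ s - ν s| * π s a + ν s * |π s a - π' s a|) * P s a s' :=
        sum_le_sum fun s' _ => by
          simp only [stepDist, ← sum_sub_distrib]
          refine (abs_sum_le_sum_abs _ _).trans <| sum_le_sum fun s _ =>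
            (abs_sum_le_sum_abs _ _).trans <| sum_le_sum fun a _ => ?_
          rw [show μ s * π s a * P s a s' - ν s * π' s a * P s a s'
              = ((μ s - ν s) * π s a + ν s * (π s a - π' s a)) * P s a s' by ring,
            abs_mul, abs_of_nonneg ((hP s a).1 s')]
          refine mul_le_mul_of_nonneg_right ((abs_add_le _ _).trans_eq ?_) ((hP s a).1 s')
          rw [abs_mul, abs_mul, abs_of_nonneg ((hπ s).1 a), abs_of_nonneg (hν s)]
    _ = ∑ s, ∑ a, (|μ s - ν s| * π s a + ν s * |π s a - π' s a|) := by
        rw [sum_comm]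
        refine sum_congr rfl fun s _ => ?_
        rw [sum_comm]
        simp only [← mul_sum, (hP _ _).2, mul_one]
    _ = ∑ s, |μ s - ν s| + ∑ s, ν s * ∑ a, |π s a - π' s a| := by
        simp only [sum_add_distrib, ← mul_sum, (hπ _).2, mul_one]

lemma sum_abs_stateDist_sub_le (hμ0 : IsProb μ0) (hP : ∀ s a, IsProb (P s a))
    (hπ : ∀ s, IsProb (π s)) (hπ' : ∀ s, IsProb (π' s)) {δ : ℝ}
    (hδ : ∀ s, ∑ a, |π s a - π' s a| ≤ δ) (t : ℕ) :
    ∑ s, |stateDist μ0 P π t s - stateDist μ0 P π' t s| ≤ t * δ := by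
  induction t with
  | zero => simp [stateDist]
  | succ t ih =>
    have hd := isProb_stateDist hμ0 hP hπ' t
    have hmix : ∑ s, stateDist μ0 P π' t s * ∑ a, |π s a - π' s a| ≤ δ :=
      (le_abs_self _).trans <| hd.abs_sum_mul_le fun s => by
        rw [abs_of_nonneg (sum_nonneg fun _ _ => abs_nonneg _)]
        exact hδ s
    simp only [stateDist_succ]
    push_cast
    linarith [sum_abs_stepDist_sub_le hP hπ (stateDist μ0 P π t) hd.1 (π' := π')]

lemma sum_abs_visitDist_sub_le (hμ0 : IsProb μ0) (hP : ∀ s a, IsProb (P s a))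
    (hπ : ∀ s, IsProb (π s)) (hπ' : ∀ s, IsProb (π' s)) (hγ0 : 0 ≤ γ) (hγ1 : γ < 1) {δ : ℝ}
    (hδ : ∀ s, ∑ a, |π s a - π' s a| ≤ δ) :
    ∑ s, |visitDist μ0 P γ π s - visitDist μ0 P γ π' s| ≤ δ * (γ / (1 - γ) ^ 2) := by
  have hd := summable_pow_mul_stateDist hμ0 hP hπ hγ0 hγ1
  have hd' := summable_pow_mul_stateDist hμ0 hP hπ' hγ0 hγ1
  have hdiff : ∀ s, Summable fun t =>
      |γ ^ t * stateDist μ0 P π t s - γ ^ t * stateDist μ0 P π' t s| :=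
    fun s => ((hd s).sub (hd' s)).abs
  calc ∑ s, |visitDist μ0 P γ π s - visitDist μ0 P γ π' s|
      ≤ ∑ s, ∑' t, |γ ^ t * stateDist μ0 P π t s - γ ^ t * stateDist μ0 P π' t s| :=
        sum_le_sum fun s _ => by
          rw [visitDist, visitDist, ← (hd s).tsum_sub (hd' s)]
          exact abs_tsum_le_tsum_abs (hdiff s)
    _ = ∑' t, ∑ s, |γ ^ t * stateDist μ0 P π t s - γ ^ t * stateDist μ0 P π' t s| :=
        (Summable.tsum_finsetSum fun s _ => hdiff s).symm
    _ ≤ ∑' t : ℕ, δ * (t * γ ^ t) := by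
        refine Summable.tsum_le_tsum (fun t => ?_) (summable_sum fun s _ => hdiff s)
          ((summable_natCast_mul_pow hγ0 hγ1).mul_left δ)
        simp only [← mul_sub, abs_mul, abs_of_nonneg (pow_nonneg hγ0 t), ← mul_sum]
        nlinarith [sum_abs_stateDist_sub_le hμ0 hP hπ hπ' hδ t, pow_nonneg hγ0 t]
    _ = δ * (γ / (1 - γ) ^ 2) := by
        rw [tsum_mul_left, tsum_coe_mul_geometric_of_norm_lt_one
          (by rwa [Real.norm_eq_abs, abs_of_nonneg hγ0])]

end MDP

theorem trpo_policy_improvement_bound_general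
    {S Act : Type*} [Fintype S] [Fintype Act] [DecidableEq S]
    (μ0 : S → ℝ) (hμ0 : IsProb μ0)
    (P : S → Act → S → ℝ) (hP : ∀ s a, IsProb (P s a))
    (r : S → Act → S → ℝ)
    (γ : ℝ) (hγ0 : 0 ≤ γ) (hγ1 : γ < 1)
    (πold π : S → Act → ℝ)
    (hπold : ∀ s, IsProb (πold s)) (hπ : ∀ s, IsProb (π s))
    (L C : ℝ)
    (hL : L = expReturn μ0 P r γ πold
      + ∑ s, visitDist μ0 P γ πold s * ∑ a, π s a * advFun P r γ πold s a)
    (hC : C = 4 * (⨆ s, ⨆ a, |advFun P r γ πold s a|) * γ / (1 - γ) ^ 2) :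
    expReturn μ0 P r γ π
      ≥ L - C * (⨆ s, tvDist (πold s) (π s)) ^ 2 := by
  set ε := ⨆ s, ⨆ a, |advFun P r γ πold s a|
  set α := ⨆ s, tvDist (πold s) (π s)
  have hε0 : 0 ≤ ε := Real.iSup_nonneg fun s => Real.iSup_nonneg fun a => abs_nonneg _
  have hα0 : 0 ≤ α := Real.iSup_nonneg fun s => tvDist_nonneg _ _
  have hε : ∀ s a, |advFun P r γ πold s a| ≤ ε := fun s a =>
    (le_ciSup (Finite.bddAbove_range _) a).trans
      (le_ciSup (f := fun s => ⨆ a, |advFun P r γ πold s a|) (Finite.bddAbove_range _) s)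
  have hδ : ∀ s, ∑ a, |π s a - πold s a| ≤ 2 * α := fun s => by
    rw [sum_abs_sub_eq_two_mul_tvDist]
    exact mul_le_mul_of_nonneg_left
      (le_ciSup (f := fun s => tvDist (πold s) (π s)) (Finite.bddAbove_range _) s) zero_le_two
  have hadv : ∀ s, |∑ a, π s a * advFun P r γ πold s a| ≤ 2 * α * ε := fun s => by
    rw [sum_mul_advFun_eq_sum_sub_mul hP hπold hγ0 hγ1]
    exact (abs_sum_sub_mul_le _ _ (hε s)).trans (mul_le_mul_of_nonneg_right (hδ s) hε0)
  have hgap : expReturn μ0 P r γ π - L = ∑ s, (visitDist μ0 P γ π s - visitDist μ0 P γ πold s)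
      * ∑ a, π s a * advFun P r γ πold s a := by
    rw [hL, ← sub_sub, expReturn_sub_expReturn_eq hμ0 hP hπ hπold hγ0 hγ1, ← sum_sub_distrib]
    simp only [sub_mul]
  have hbound : |expReturn μ0 P r γ π - L| ≤ C * α ^ 2 := calc
    _ ≤ (∑ s, |visitDist μ0 P γ π s - visitDist μ0 P γ πold s|) * (2 * α * ε) :=
      hgap ▸ abs_sum_sub_mul_le _ _ hadv
    _ ≤ 2 * α * (γ / (1 - γ) ^ 2) * (2 * α * ε) := by
      gcongr
      exact sum_abs_visitDist_sub_le hμ0 hP hπ hπold hγ0 hγ1 hδ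
    _ = C * α ^ 2 := by rw [hC]; ring
  linarith [neg_abs_le (expReturn μ0 P r γ π - L)]

/-- **TRPO policy improvement bound** (Schulman et al. 2015): with
`L_{π_old}(π) = η(π_old) + E_{s∼ρ_{π_old}, a∼π(·|s)}[A^{π_old}(s,a)]` and
`C = 4 max_{s,a} |A^{π_old}(s,a)| γ / (1−γ)²`,
`η(π) ≥ L_{π_old}(π) − C (max_s D_TV(π_old(·|s), π(·|s)))²`. -/
theorem trpo_policy_improvement_bound
    {S Act : Type*} [Fintype S] [Fintype Act] [DecidableEq S]
    [Nonempty S] [Nonempty Act]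
    (μ0 : S → ℝ) (hμ0 : IsProb μ0)
    (P : S → Act → S → ℝ) (hP : ∀ s a, IsProb (P s a))
    (r : S → Act → S → ℝ)
    (γ : ℝ) (hγ0 : 0 ≤ γ) (hγ1 : γ < 1)
    (πold π : S → Act → ℝ)
    (hπold : ∀ s, IsProb (πold s)) (hπ : ∀ s, IsProb (π s))
    (L C : ℝ)
    (hL : L = expReturn μ0 P r γ πold
      + ∑ s, visitDist μ0 P γ πold s * ∑ a, π s a * advFun P r γ πold s a)
    (hC : C = 4 * (⨆ s, ⨆ a, |advFun P r γ πold s a|) * γ / (1 - γ) ^ 2) :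
    expReturn μ0 P r γ π
      ≥ L - C * (⨆ s, tvDist (πold s) (π s)) ^ 2 :=
  trpo_policy_improvement_bound_general μ0 hμ0 P hP r γ hγ0 hγ1 πold π hπold hπ L C hL hC
end

section
/- In the one-step (bandit) RL setting, let q∼D be a prompt distribution over a finite set, η(π) = E_{q∼D, o∼π(·|q)}[R(q,o)] for a bounded reward R, π_ref a fixed reference policy, and η'(π) = η(π) − β·E_{q∼D}[D_KL(π(·|q)‖π_ref(·|q))]. Define M(π) = η(π_old) + E_{q∼D, o∼π(·|q)}[A^{π_old}(q,o)] − E_{q∼D}[λ·D_KL(π(·|q)‖π_old(·|q)) + β·D_KL(π(·|q)‖π_ref(·|q))], where A^{π_old}(q,o) = R(q,o) − E_{o'∼π_old(·|q)}[R(q,o')]. If π* maximizes M over all policies, then η'(π*) ≥ η'(π_old), provided the improvement-bound constant satisfies C ≤ λ (in the one-step setting one may verify this directly since η(π) = η(π_old) + E_{q,o∼π}[A^{π_old}(q,o)] exactly). -/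
noncomputable def klDiv {O : Type*} [Fintype O] (p q : O → ℝ) : ℝ :=
  ∑ o, p o * Real.log (p o / q o)

/-- One-step (bandit) expected reward `η(π) = E_{q∼D, o∼π(·|q)}[R(q,o)]`. -/
def eta {Q O : Type*} [Fintype Q] [Fintype O]
    (D : Q → ℝ) (R : Q → O → ℝ) (π : Q → O → ℝ) : ℝ :=
  ∑ q, D q * ∑ o, π q o * R q o

open Finset

lemma sub_le_mul_log_div {p q : ℝ} (hp : 0 ≤ p) (hq : 0 < q) : p - q ≤ p * Real.log (p / q) := by
  have h := mul_nonneg hq.le (InformationTheory.klFun_nonneg (div_nonneg hp hq.le))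
  rw [InformationTheory.klFun_apply, mul_sub, mul_add, ← mul_assoc, mul_div_cancel₀ _ hq.ne'] at h
  linarith

section Finite

variable {O : Type*} [Fintype O]

lemma klDiv_nonneg {p q : O → ℝ} (hp : IsProb p) (hq : IsProb q) (hq_pos : ∀ o, 0 < q o) :
    0 ≤ klDiv p q := by
  have h : ∑ o, (p o - q o) ≤ klDiv p q :=
    sum_le_sum fun o _ => sub_le_mul_log_div (hp.1 o) (hq_pos o)
  rwa [sum_sub_distrib, hp.2, hq.2, sub_self] at h

lemma klDiv_self (p : O → ℝ) : klDiv p p = 0 := by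
  refine sum_eq_zero fun o _ => ?_
  rcases eq_or_ne (p o) 0 with h | h <;> simp [h]

lemma IsProb.sum_mul_sub_const {p : O → ℝ} (hp : IsProb p) (f : O → ℝ) (b : ℝ) :
    ∑ o, p o * (f o - b) = ∑ o, p o * f o - b := by
  simp only [mul_sub, sum_sub_distrib, ← sum_mul, hp.2, one_mul]

end Finite

section Bandit

variable {Q O : Type*} [Fintype Q] [Fintype O]

lemma sum_mul_klDiv_nonneg {D : Q → ℝ} (hD : ∀ q, 0 ≤ D q) {π ρ : Q → O → ℝ}
    (hπ : ∀ q, IsProb (π q)) (hρ : ∀ q, IsProb (ρ q)) (hρ_pos : ∀ q o, 0 < ρ q o) :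
    0 ≤ ∑ q, D q * klDiv (π q) (ρ q) :=
  sum_nonneg fun q _ => mul_nonneg (hD q) (klDiv_nonneg (hπ q) (hρ q) (hρ_pos q))

lemma eta_add_expected_advantage (D : Q → ℝ) (R : Q → O → ℝ) {πold π A : Q → O → ℝ}
    (hA : ∀ q o, A q o = R q o - ∑ o', πold q o' * R q o') (hπ : ∀ q, IsProb (π q)) :
    eta D R πold + ∑ q, D q * ∑ o, π q o * A q o = eta D R π := by
  simp only [eta, hA, (hπ _).sum_mul_sub_const, ← sum_add_distrib]
  exact sum_congr rfl fun q _ => by ring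

lemma surrogate_eq_regularized_sub_klDiv (D : Q → ℝ) (R : Q → O → ℝ)
    {πold πref π A : Q → O → ℝ} (lam β : ℝ)
    (hA : ∀ q o, A q o = R q o - ∑ o', πold q o' * R q o') (hπ : ∀ q, IsProb (π q)) :
    eta D R πold + (∑ q, D q * ∑ o, π q o * A q o)
        - ∑ q, D q * (lam * klDiv (π q) (πold q) + β * klDiv (π q) (πref q))
      = eta D R π - β * ∑ q, D q * klDiv (π q) (πref q)
        - lam * ∑ q, D q * klDiv (π q) (πold q) := by
  rw [eta_add_expected_advantage D R hA hπ, mul_sum, mul_sum, sub_sub, ← sum_add_distrib]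
  congr 2
  exact funext fun q => by ring

end Bandit

theorem bandit_reverse_kl_monotonic_improvement_general
    {Q O : Type*} [Fintype Q] [Fintype O]
    (D : Q → ℝ) (hD : IsProb D)
    (R : Q → O → ℝ)
    (πold πref πstar : Q → O → ℝ)
    (hπold : ∀ q, IsProb (πold q))
    (hπstar : ∀ q, IsProb (πstar q))
    (holdpos : ∀ q o, 0 < πold q o)
    (lam β : ℝ) (hlam : 0 ≤ lam)
    (A : Q → O → ℝ)
    (hA : ∀ q o, A q o = R q o - ∑ o', πold q o' * R q o')
    (M : (Q → O → ℝ) → ℝ)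
    (hM : ∀ π, M π
      = eta D R πold + (∑ q, D q * ∑ o, π q o * A q o)
        - ∑ q, D q * (lam * klDiv (π q) (πold q) + β * klDiv (π q) (πref q)))
    (hmax : ∀ π : Q → O → ℝ, (∀ q, IsProb (π q)) → M π ≤ M πstar) :
    eta D R πold - β * ∑ q, D q * klDiv (πold q) (πref q)
      ≤ eta D R πstar - β * ∑ q, D q * klDiv (πstar q) (πref q) := by
  have hM_eq : ∀ π, (∀ q, IsProb (π q)) → M π = eta D R π - β * ∑ q, D q * klDiv (π q) (πref q)
      - lam * ∑ q, D q * klDiv (π q) (πold q) := fun π hπ =>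
    (hM π).trans (surrogate_eq_regularized_sub_klDiv D R lam β hA hπ)
  have hM_old := hM_eq πold hπold
  simp only [klDiv_self, mul_zero, sum_const_zero, sub_zero] at hM_old
  have hkl : 0 ≤ lam * ∑ q, D q * klDiv (πstar q) (πold q) :=
    mul_nonneg hlam (sum_mul_klDiv_nonneg hD.1 hπstar hπold holdpos)
  linarith [hmax πold hπold, hM_eq πstar hπstar]

/-- Monotonic improvement for reverse-KL-regularized policy optimization in the
one-step (bandit) setting: if `π*` maximizes the regularized surrogate `M`, then
the reference-regularized objective `η'` does not decrease: `η'(π*) ≥ η'(π_old)`. -/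
theorem bandit_reverse_kl_monotonic_improvement
    {Q O : Type*} [Fintype Q] [Fintype O]
    (D : Q → ℝ) (hD : IsProb D)
    (R : Q → O → ℝ)
    (πold πref πstar : Q → O → ℝ)
    (hπold : ∀ q, IsProb (πold q)) (hπref : ∀ q, IsProb (πref q))
    (hπstar : ∀ q, IsProb (πstar q))
    (holdpos : ∀ q o, 0 < πold q o) (hrefpos : ∀ q o, 0 < πref q o)
    (lam β : ℝ) (hlam : 0 ≤ lam) (hβ : 0 ≤ β)
    (A : Q → O → ℝ)
    (hA : ∀ q o, A q o = R q o - ∑ o', πold q o' * R q o')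
    (M : (Q → O → ℝ) → ℝ)
    (hM : ∀ π, M π
      = eta D R πold + (∑ q, D q * ∑ o, π q o * A q o)
        - ∑ q, D q * (lam * klDiv (π q) (πold q) + β * klDiv (π q) (πref q)))
    (hmax : ∀ π : Q → O → ℝ, (∀ q, IsProb (π q)) → M π ≤ M πstar) :
    eta D R πold - β * ∑ q, D q * klDiv (πold q) (πref q)
      ≤ eta D R πstar - β * ∑ q, D q * klDiv (πstar q) (πref q) :=
  bandit_reverse_kl_monotonic_improvement_general D hD R πold πref πstar hπold hπstar holdpos lam β
    hlam A hA M hM hmax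
end
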